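/- arXiv:1901.01442 — 4 statements merged into one kernel-verified Lean document; each statement's English description precedes it below -/
import Mathlib

section
/- Let R be a ring and M a right R-module. If M is finitely generated and M is R-projective (i.e., every homomorphism from M to R/I, for any right ideal I, factors through the canonical projection R → R/I), then M is projective. -/
universe u v

/-- `M` is `R`-projective: every homomorphism from `M` to `R ⧸ I`, for any ideal `I`,
factors through the canonical projection `R → R ⧸ I`. -/
def IsRProjective (R : Type u) [Ring R] (M : Type v) [AddCommGroup M] [Module R M] : Prop :=
  ∀ (I : Submodule R R) (f : M →ₗ[R] R ⧸ I), ∃ g : M →ₗ[R] R, I.mkQ.comp g = f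

/-!
A finitely generated `M` is a quotient of `Rⁿ`, so it suffices that `M` be projective relative
to `Rⁿ`: lifting the identity of `M` along `Rⁿ → M` then splits it. Projectivity relative to `N`
(lifting along every quotient `N → N ⧸ K`) passes to quotients of `N` and to binary products,
hence from `R` to `Rⁿ`.
-/

variable {R : Type*} [Ring R] {M N N' : Type*} [AddCommGroup M] [Module R M]
  [AddCommGroup N] [Module R N] [AddCommGroup N'] [Module R N']

variable (R M N) in
def IsProjectiveRelativeTo : Prop :=
  ∀ (K : Submodule R N) (f : M →ₗ[R] N ⧸ K), ∃ g : M →ₗ[R] N, K.mkQ ∘ₗ g = f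

theorem IsRProjective.isProjectiveRelativeTo_self (h : IsRProjective R M) :
    IsProjectiveRelativeTo R M R :=
  h

namespace IsProjectiveRelativeTo

theorem exists_comp_eq (h : IsProjectiveRelativeTo R M N) {X : Type*} [AddCommGroup X]
    [Module R X] (π : N →ₗ[R] X) (hπ : Function.Surjective π) (f : M →ₗ[R] X) :
    ∃ g : M →ₗ[R] N, π ∘ₗ g = f := by
  let e := π.quotKerEquivOfSurjective hπ
  obtain ⟨g, hg⟩ := h (LinearMap.ker π) (e.symm.toLinearMap ∘ₗ f)
  refine ⟨g, LinearMap.ext fun m ↦ ?_⟩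
  simpa [e, LinearMap.quotKerEquivOfSurjective_apply_mk] using
    congrArg e (LinearMap.congr_fun hg m)

theorem of_surjective (h : IsProjectiveRelativeTo R M N) (π : N →ₗ[R] N')
    (hπ : Function.Surjective π) : IsProjectiveRelativeTo R M N' := by
  intro K f
  obtain ⟨g, hg⟩ := h.exists_comp_eq (K.mkQ ∘ₗ π) (K.mkQ_surjective.comp hπ) f
  exact ⟨π ∘ₗ g, hg⟩

/-- Lift first modulo the image `T` of `N'`, using projectivity relative to `N`; the error then
lies in `T`, and is lifted to `N'`. -/
theorem prod (h : IsProjectiveRelativeTo R M N) (h' : IsProjectiveRelativeTo R M N') :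
    IsProjectiveRelativeTo R M (N × N') := by
  intro K f
  set T := LinearMap.range (K.mkQ ∘ₗ LinearMap.inr R N N')
  have hT : Function.Surjective (T.mkQ ∘ₗ K.mkQ ∘ₗ LinearMap.inl R N N') := by
    intro y
    obtain ⟨⟨a, b⟩, rfl⟩ := (T.mkQ_surjective.comp K.mkQ_surjective) y
    refine ⟨a, (Submodule.Quotient.eq T).2 ⟨-b, ?_⟩⟩
    simp only [LinearMap.comp_apply, LinearMap.inl_apply, LinearMap.inr_apply, ← map_sub,
      Prod.mk_sub_mk, sub_self, zero_sub]
  obtain ⟨g₁, hg₁⟩ := h.exists_comp_eq _ hT (T.mkQ ∘ₗ f)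
  have herr : ∀ m, (f - K.mkQ ∘ₗ LinearMap.inl R N N' ∘ₗ g₁) m ∈ T := fun m ↦ by
    rw [← Submodule.Quotient.mk_eq_zero, LinearMap.sub_apply, Submodule.Quotient.mk_sub,
      sub_eq_zero]
    exact (LinearMap.congr_fun hg₁ m).symm
  obtain ⟨g₂, hg₂⟩ := h'.exists_comp_eq _ (K.mkQ ∘ₗ LinearMap.inr R N N').surjective_rangeRestrict
    ((f - K.mkQ ∘ₗ LinearMap.inl R N N' ∘ₗ g₁).codRestrict T herr)
  refine ⟨g₁.prod g₂, LinearMap.ext fun m ↦ ?_⟩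
  have hlift : K.mkQ (0, g₂ m) = f m - K.mkQ (g₁ m, 0) :=
    congrArg Subtype.val (LinearMap.congr_fun hg₂ m)
  rw [eq_sub_iff_add_eq, ← map_add, Prod.mk_add_mk, zero_add, add_zero] at hlift
  exact hlift

theorem pi_fin (h : IsProjectiveRelativeTo R M N) :
    ∀ n : ℕ, IsProjectiveRelativeTo R M (Fin n → N)
  | 0 => fun _ _ ↦ ⟨0, Subsingleton.elim _ _⟩
  | n + 1 =>
    let e := Fin.consLinearEquiv R fun _ : Fin (n + 1) ↦ N
    (h.prod (h.pi_fin n)).of_surjective e.toLinearMap e.surjective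

theorem projective_of_surjective (h : IsProjectiveRelativeTo R M N) [Module.Projective R N]
    (π : N →ₗ[R] M) (hπ : Function.Surjective π) : Module.Projective R M :=
  let ⟨s, hs⟩ := h.exists_comp_eq π hπ LinearMap.id
  .of_split s π hs

end IsProjectiveRelativeTo

/-- A finitely generated `R`-projective module is projective. -/
theorem finitelyGenerated_isRProjective_projective
    (R : Type u) [Ring R] (M : Type u) [AddCommGroup M] [Module R M]
    (hfg : Module.Finite R M) (hRproj : IsRProjective R M) :
    Module.Projective R M := by
  obtain ⟨n, π, hπ⟩ := Module.Finite.exists_fin' R M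
  exact (hRproj.isProjectiveRelativeTo_self.pi_fin n).projective_of_surjective π hπ
end

section
/- Let R be a non-right-perfect right noetherian ring and M a nonzero right R-module with no maximal (proper) submodules. Then M is R-projective but not projective. -/
universe u v

/-- Bass's characterization of perfect rings: `R/J` is semisimple and the Jacobson radical `J`
is T-nilpotent. -/
def IsPerfectRing (R : Type u) [Ring R] : Prop :=
  IsSemisimpleModule R (R ⧸ (Ideal.jacobson (⊥ : Ideal R) : Submodule R R)) ∧
  ∀ a : ℕ → R, (∀ n, a n ∈ Ideal.jacobson (⊥ : Ideal R)) →
    ∃ n, ((List.range (n + 1)).map a).prod = 0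

/-- Any linear map from a module with no maximal submodules into a Noetherian module is zero. -/
theorem aux_hom_eq_zero {R : Type u} [Ring R] {M : Type v} [AddCommGroup M] [Module R M]
    (hmax : ∀ N : Submodule R M, ¬ IsCoatom N)
    {N : Type*} [AddCommGroup N] [Module R N] [IsNoetherian R N]
    (f : M →ₗ[R] N) : f = 0 := by
  by_contra hf
  have hr : LinearMap.range f ≠ ⊥ := by
    simpa [LinearMap.range_eq_bot] using hf
  set Q := LinearMap.range f
  haveI : IsNoetherian R Q := inferInstance
  haveI : Nontrivial Q := Submodule.nontrivial_iff_ne_bot.2 hr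
  haveI : Nontrivial (Submodule R Q) := ⟨⊥, ⊤, bot_ne_top⟩
  obtain ⟨P, hP⟩ := IsCoatomic.exists_coatom (α := Submodule R Q)
  set g := f.rangeRestrict
  have hg : Function.Surjective g := f.surjective_rangeRestrict
  have hker : LinearMap.ker g ≤ Submodule.comap g P := by
    intro x hx
    simp [Submodule.mem_comap, LinearMap.mem_ker.1 hx]
  refine hmax (Submodule.comap g P) ⟨?_, ?_⟩
  · intro h
    apply hP.1
    have := Submodule.map_comap_eq_of_surjective hg P
    rw [h, Submodule.map_top, LinearMap.range_eq_top.2 hg] at this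
    exact this.symm
  · intro L hL
    have hPL : P ≤ Submodule.map g L := by
      rw [← Submodule.map_comap_eq_of_surjective hg P]
      exact Submodule.map_mono hL.le
    have hne : Submodule.map g L ≠ P := by
      intro h
      have : L ≤ Submodule.comap g P := by
        rw [← h]
        intro x hx
        exact Submodule.mem_comap.2 (Submodule.mem_map_of_mem hx)
      exact absurd this (not_le_of_gt hL)
    have htop : Submodule.map g L = ⊤ := hP.2 _ (lt_of_le_of_ne hPL (Ne.symm hne))
    have : Submodule.comap g (Submodule.map g L) = L := by
      rw [Submodule.comap_map_eq, sup_eq_left.2 (le_trans hker hL.le)]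
    rw [htop, Submodule.comap_top] at this
    exact this.symm

/-- Over a non-perfect noetherian ring, a nonzero module with no maximal submodules is
`R`-projective but not projective. -/
theorem isRProjective_not_projective_of_no_maximal_submodules
    (R : Type u) [Ring R] (hnoeth : IsNoetherianRing R) (hnperf : ¬ IsPerfectRing R)
    (M : Type u) [AddCommGroup M] [Module R M] (hM : Nontrivial M)
    (hmax : ∀ N : Submodule R M, ¬ IsCoatom N) :
    IsRProjective R M ∧ ¬ Module.Projective R M := by
  haveI : IsNoetherian R R := hnoeth
  constructor
  · intro I f
    haveI : IsNoetherian R (R ⧸ I) := inferInstance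
    refine ⟨0, ?_⟩
    rw [aux_hom_eq_zero hmax f]
    ext x; simp
  · intro hproj
    obtain ⟨s, hs⟩ := Module.projective_def.1 hproj
    obtain ⟨m, hm⟩ := exists_ne (0 : M)
    have hsm : s m ≠ 0 := fun h => hm (by simpa [h] using (hs m).symm)
    obtain ⟨a, ha⟩ := Finsupp.ne_iff.1 hsm
    have : (Finsupp.lapply a : (M →₀ R) →ₗ[R] R).comp s = 0 := aux_hom_eq_zero hmax _
    have := LinearMap.congr_fun this m
    simp [Finsupp.lapply_apply] at this
    exact ha (by simpa using this)
end

section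
/- Let R be a commutative noetherian ring with a regular (non-zero-divisor) element r that is not invertible, and let p be a maximal ideal containing r. Then the injective hull E(R/p) has no maximal submodules. -/
universe u

/-- Let `R` be a commutative noetherian ring with a regular non-invertible element `r`, and let
`p` be a maximal ideal containing `r`. Then the injective hull `E(R/p)` (here: any injective
module `E` containing `R/p` as an essential submodule) has no maximal submodules. -/
theorem injectiveHull_no_maximal_submodules
    (R : Type u) [CommRing R] [IsNoetherianRing R]
    (r : R) (hreg : r ∈ nonZeroDivisors R) (hunit : ¬ IsUnit r)
    (p : Ideal R) (hp : p.IsMaximal) (hrp : r ∈ p)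
    (E : Type u) [AddCommGroup E] [Module R E] (hinj : Module.Injective R E)
    (ι : (R ⧸ p) →ₗ[R] E) (hι : Function.Injective ι)
    (hess : ∀ N : Submodule R E, N ⊓ LinearMap.range ι = ⊥ → N = ⊥) :
    ¬ ∃ N : Submodule R E, IsCoatom N := by
  rintro ⟨N, hN⟩
  -- `E` is divisible by `r`.
  have hdiv : ∀ x : E, ∃ y : E, r • y = x := by
    intro x
    have hinjf : Function.Injective (LinearMap.toSpanSingleton R R r) := by
      intro a b hab
      simp only [LinearMap.toSpanSingleton_apply, smul_eq_mul] at hab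
      exact (mul_cancel_right_mem_nonZeroDivisors hreg).mp hab
    obtain ⟨h, hh⟩ := hinj.out (LinearMap.toSpanSingleton R R r) hinjf
      (LinearMap.toSpanSingleton R E x)
    refine ⟨h 1, ?_⟩
    have h1 := hh 1
    simp only [LinearMap.toSpanSingleton_apply, one_smul] at h1
    rw [← h1, ← map_smul, smul_eq_mul, mul_one]
  -- `r` kills the range of `ι`.
  have hkill : ∀ z : R ⧸ p, r • z = (0 : R ⧸ p) := by
    intro z
    obtain ⟨w, rfl⟩ := Submodule.Quotient.mk_surjective p z
    rw [← Submodule.Quotient.mk_smul]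
    exact (Submodule.Quotient.mk_eq_zero p).mpr (by simpa [smul_eq_mul] using p.mul_mem_right w hrp)
  -- every element of `E` is killed by a power of `r`.
  have htor : ∀ x : E, ∃ n : ℕ, r ^ n • x = 0 := by
    intro x
    set f : ℕ →o Ideal R :=
      ⟨fun n => LinearMap.ker (LinearMap.toSpanSingleton R E (r ^ n • x)), by
        intro a b hab
        induction b, hab using Nat.le_induction with
        | base => exact le_rfl
        | succ b hb ih =>
          refine ih.trans ?_
          intro c hc
          simp only [LinearMap.mem_ker, LinearMap.toSpanSingleton_apply] at hc ⊢
          rw [pow_succ, mul_comm, mul_smul, smul_comm, hc, smul_zero]⟩ with hf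
    obtain ⟨n₀, hn₀⟩ := monotone_stabilizes_iff_noetherian.mpr ‹IsNoetherianRing R› f
    refine ⟨n₀ + 1, ?_⟩
    by_contra hne
    have hsub : (R ∙ (r ^ (n₀ + 1) • x)) ⊓ LinearMap.range ι ≠ ⊥ := by
      intro h
      exact hne (by simpa using (Submodule.span_singleton_eq_bot.mp (hess _ h)))
    obtain ⟨u, hu, hu0⟩ := Submodule.exists_mem_ne_zero_of_ne_bot hsub
    obtain ⟨humem, ⟨z, hz⟩⟩ := hu
    obtain ⟨a, ha⟩ := Submodule.mem_span_singleton.mp humem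
    -- `r • u = 0` since `u ∈ range ι`.
    have hru : r • u = 0 := by
      rw [← hz, ← map_smul, hkill z, map_zero]
    -- hence `a` kills `r ^ (n₀ + 2) • x`, so it kills `r ^ (n₀ + 1) • x`, i.e. `u = 0`.
    have ha2 : a ∈ f (n₀ + 2) := by
      show a • (r ^ (n₀ + 2) • x) = 0
      rw [show n₀ + 2 = (n₀ + 1) + 1 from rfl, pow_succ', mul_smul, smul_comm a r, ha, hru]
    have ha1 : a ∈ f (n₀ + 1) := by
      have hker : f (n₀ + 1) = f (n₀ + 2) := (hn₀ (n₀ + 1) (by omega)).symm.trans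
        (hn₀ (n₀ + 2) (by omega))
      rw [hker]; exact ha2
    have : u = 0 := by
      have hz0 : a • (r ^ (n₀ + 1) • x) = 0 := ha1
      rw [← ha, hz0]
    exact hu0 this
  -- Work in the quotient `Q = E ⧸ N`.
  set Q := E ⧸ N with hQ
  set π : E →ₗ[R] Q := N.mkQ with hπ
  -- any element of `E` not in `N` generates `Q`.
  have hgen : ∀ e : E, e ∉ N → ∀ q : Q, ∃ c : R, c • π e = q := by
    intro e he q
    have hW : N ⊔ (R ∙ e) = ⊤ := by
      refine hN.2 _ (lt_of_le_of_ne le_sup_left fun h => he ?_)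
      exact h ▸ (le_sup_right : (R ∙ e) ≤ N ⊔ (R ∙ e)) (Submodule.mem_span_singleton_self e)
    obtain ⟨w, rfl⟩ := Submodule.Quotient.mk_surjective N q
    have hw : w ∈ N ⊔ (R ∙ e) := hW ▸ Submodule.mem_top
    obtain ⟨y, hy, z, hz, rfl⟩ := Submodule.mem_sup.mp hw
    obtain ⟨c, rfl⟩ := Submodule.mem_span_singleton.mp hz
    refine ⟨c, ?_⟩
    have : π (y + c • e) = c • π e := by
      rw [map_add, map_smul]
      have : π y = 0 := by
        rw [hπ, Submodule.mkQ_apply, Submodule.Quotient.mk_eq_zero]; exact hy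
      rw [this, zero_add]
    rw [this.symm, hπ, Submodule.mkQ_apply]
  by_cases hr : ∀ q : Q, r • q = 0
  · -- every element of `E` lies in `N`, contradicting `N ≠ ⊤`.
    refine hN.1 (Submodule.eq_top_iff'.mpr fun e => ?_)
    obtain ⟨y, rfl⟩ := hdiv e
    have h2 : π (r • y) = 0 := by rw [map_smul]; exact hr (π y)
    rwa [hπ, Submodule.mkQ_apply, Submodule.Quotient.mk_eq_zero] at h2
  · push_neg at hr
    obtain ⟨q, hq⟩ := hr
    obtain ⟨e, rfl⟩ := Submodule.Quotient.mk_surjective N q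
    have hre : r • e ∉ N := by
      intro h
      exact hq (by
        rw [← Submodule.Quotient.mk_smul, Submodule.Quotient.mk_eq_zero]; exact h)
    obtain ⟨b, hb⟩ := hgen (r • e) hre (Submodule.Quotient.mk e)
    -- `π e = (b * r) • π e`, hence `π e = (b*r)^n • π e` for all `n`.
    have hbe : (b * r) • (Submodule.Quotient.mk e : Q) = Submodule.Quotient.mk e := by
      rw [mul_smul]
      rw [hπ, Submodule.mkQ_apply, ← Submodule.Quotient.mk_smul] at hb
      exact hb
    have hpow : ∀ n : ℕ, ((b * r) ^ n) • (Submodule.Quotient.mk e : Q) =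
        Submodule.Quotient.mk e := by
      intro n
      induction n with
      | zero => simp
      | succ n ih => rw [pow_succ, mul_smul, hbe, ih]
    obtain ⟨n, hn⟩ := htor e
    have : (Submodule.Quotient.mk e : Q) = 0 := by
      rw [← hpow n, mul_pow, mul_smul, ← Submodule.Quotient.mk_smul, hn,
        Submodule.Quotient.mk_zero, smul_zero]
    exact hre (N.smul_mem r ((Submodule.Quotient.mk_eq_zero N).mp this))
end

section
/- Let R be a semiartinian ring with socle sequence (S_α)_{α ≤ σ+1}. For any right R-module M and any ordinal α ≤ σ, the quotient M·S_{α+1}/M·S_α is isomorphic to a direct sum of simple modules each of which is a direct summand of S_{α+1}/S_α (i.e., an α-th layer simple module of R). -/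
/-!
For every `m : M` the map `r ↦ r • m` sends `S_α` into `M·S_α`, so it induces
`R/S_α → M/M·S_α`, which carries the layer `S_{α+1}/S_α` onto the image of `S_{α+1}·m`.
Hence `M·S_{α+1}/M·S_α` is a sum of homomorphic images of the layer. The layer is a socle,
so it is semisimple; a sum of images of a semisimple module is semisimple, and any of its
simple submodules receives a nonzero map from the layer, so it is isomorphic to a simple
submodule of the layer.
-/

universe u

open Submodule

/-- The socle of a module: the supremum of all simple submodules. -/
noncomputable def socle (R : Type u) [Ring R] (M : Type u) [AddCommGroup M] [Module R M] :
    Submodule R M :=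
  sSup {S : Submodule R M | IsAtom S}

/-- The Loewy (socle) sequence of a module, defined by transfinite recursion:
`loewy R M 0 = ⊥`, `loewy R M (α+1) / loewy R M α = Soc (M ⧸ loewy R M α)`, and unions
at limit ordinals. -/
noncomputable def loewy (R : Type u) [Ring R] (M : Type u) [AddCommGroup M] [Module R M]
    (o : Ordinal.{u}) : Submodule R M :=
  o.limitRecOn ⊥ (fun _ N => (socle R (M ⧸ N)).comap N.mkQ)
    (fun o _ IH => ⨆ (b : Ordinal) (h : b < o), IH b h)

/-- The Loewy length of a module: the least ordinal `o` with `loewy R M o = ⊤`. -/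
noncomputable def loewyLength (R : Type u) [Ring R] (M : Type u) [AddCommGroup M]
    [Module R M] : Ordinal.{u} :=
  sInf {o : Ordinal | loewy R M o = ⊤}

/-- A ring is semiartinian if every nonzero module has a nonzero socle. -/
def IsSemiartinianRing (R : Type u) [Ring R] : Prop :=
  ∀ (M : Type u) [AddCommGroup M] [Module R M], Nontrivial M → socle R M ≠ ⊥

/-- A ring is von Neumann regular if for every `r` there is `s` with `r * s * r = r`. -/
def IsVonNeumannRegularRing (R : Type u) [Ring R] : Prop :=
  ∀ r : R, ∃ s : R, r * s * r = r

/-- `R` has primitive factors artinian: for every primitive ideal `P` (= annihilator of a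
simple module), the factor `R/P` is artinian. -/
def HasPrimitiveFactorsArtinian (R : Type u) [Ring R] : Prop :=
  ∀ (M : Type u) [AddCommGroup M] [Module R M], IsSimpleModule R M →
    IsArtinian R (R ⧸ (Module.annihilator R M : Submodule R R))

/-- The `α`-th layer of the Loewy sequence of `R`, as a submodule of `R ⧸ loewy R R α`. -/
noncomputable def loewyLayer (R : Type u) [Ring R] (α : Ordinal.{u}) :
    Submodule R (R ⧸ loewy R R α) :=
  (loewy R R (α + 1)).map (loewy R R α).mkQ

/-- The canonical projection `π_α : S_{α+1} → S_{α+1}/S_α`. -/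
noncomputable def layerProj (R : Type u) [Ring R] (α : Ordinal.{u}) :
    (loewy R R (α + 1) : Submodule R R) →ₗ[R] (loewyLayer R α) :=
  LinearMap.codRestrict _ ((loewy R R α).mkQ.comp (loewy R R (α + 1)).subtype)
    (fun x => ⟨(x : R), x.2, rfl⟩)

/-- `M` is weakly `R`-projective: every homomorphism from `M` to a layer `S_{α+1}/S_α`
(`0 < α`) with finitely generated image factors through `π_α : S_{α+1} → S_{α+1}/S_α`. -/
def IsWeaklyRProjective (R : Type u) [Ring R] (M : Type u) [AddCommGroup M]
    [Module R M] : Prop :=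
  ∀ α : Ordinal.{u}, 0 < α →
    ∀ φ : M →ₗ[R] (loewyLayer R α), (LinearMap.range φ).FG →
      ∃ ψ : M →ₗ[R] (loewy R R (α + 1) : Submodule R R), (layerProj R α).comp ψ = φ

/-- `M` is layer projective: for each `0 < α`, every simple submodule of the `α`-th layer of
`M` is isomorphic to a simple (direct summand) submodule of the `α`-th layer of `R`, i.e. the
`α`-th layer of `M` is a projective `R/S_α`-module. -/
def IsLayerProjective (R : Type u) [Ring R] (M : Type u) [AddCommGroup M]
    [Module R M] : Prop :=
  ∀ α : Ordinal.{u}, 0 < α →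
    ∀ T : Submodule R ((loewy R M (α + 1)).map (loewy R M α).mkQ), IsAtom T →
      ∃ T' : Submodule R (loewyLayer R α), IsAtom T' ∧ Nonempty (T ≃ₗ[R] T')

/-- The submodule `M·S` of `M`, generated by all products `s • m` with `s ∈ S`. -/
def smulSub (R : Type u) [Ring R] (M : Type u) [AddCommGroup M] [Module R M]
    (S : Submodule R R) : Submodule R M :=
  Submodule.span R {x : M | ∃ s ∈ S, ∃ m : M, s • m = x}

open LinearMap

section SumOfImages

variable {R L X : Type*} [Ring R] [AddCommGroup L] [Module R L] [AddCommGroup X] [Module R X]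
  [IsSemisimpleModule R L] {ι : Type*} (f : ι → L →ₗ[R] X)

theorem isSemisimpleModule_iSup_range : IsSemisimpleModule R ↥(⨆ i, range (f i)) := by
  rw [← iSup_univ]
  exact isSemisimpleModule_biSup_of_isSemisimpleModule_submodule fun i _ ↦
    IsSemisimpleModule.range (f i)

theorem exists_isAtom_linearEquiv_of_iSup_range (T : Submodule R ↥(⨆ i, range (f i)))
    (hT : IsAtom T) : ∃ S : Submodule R L, IsAtom S ∧ Nonempty (T ≃ₗ[R] S) := by
  have := isSemisimpleModule_iSup_range f
  have := isSimpleModule_iff_isAtom.mpr hT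
  have := IsSimpleModule.nontrivial R T
  obtain ⟨C, hC⟩ := exists_isCompl T
  have hpr : T.projectionOnto C hC ≠ 0 := ne_zero_of_surjective (projectionOnto_surjective hC)
  obtain ⟨_, ⟨i, rfl⟩, hi⟩ :=
    exists_ne_zero_of_sSup_eq hpr (Set.range fun i ↦ range (f i)) sSup_range
  have hne : T.projectionOnto C hC ∘ₗ inclusion _ ∘ₗ (f i).rangeRestrict ≠ 0 := fun h ↦
    hi <| (cancel_right (f i).surjective_rangeRestrict).mp (by rw [comp_assoc, h, zero_comp])
  obtain ⟨S, ⟨e⟩⟩ := linearEquiv_of_ne_zero hne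
  exact ⟨S, isSimpleModule_iff_isAtom.mp (.congr e.symm), ⟨e⟩⟩

end SumOfImages

section Layers

variable (R : Type u) [Ring R] (M : Type u) [AddCommGroup M] [Module R M]

theorem isSemisimpleModule_socle : IsSemisimpleModule R (socle R M) := by
  rw [socle, sSup_eq_iSup]
  exact isSemisimpleModule_biSup_of_isSemisimpleModule_submodule fun S hS ↦
    have := isSimpleModule_iff_isAtom.mpr hS
    inferInstance

theorem loewy_succ (α : Ordinal.{u}) :
    loewy R M (α + 1) = (socle R (M ⧸ loewy R M α)).comap (loewy R M α).mkQ := by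
  rw [loewy, Ordinal.limitRecOn_add_one]
  rfl

theorem isSemisimpleModule_map_loewy_succ (α : Ordinal.{u}) :
    IsSemisimpleModule R ((loewy R M (α + 1)).map (loewy R M α).mkQ) := by
  rw [loewy_succ, map_comap_eq_self (by rw [range_mkQ]; exact le_top)]
  exact isSemisimpleModule_socle R _

theorem smulSub_eq_iSup (S : Submodule R R) :
    smulSub R M S = ⨆ m : M, S.map (toSpanSingleton R M m) := by
  apply le_antisymm
  · rw [smulSub, span_le]
    rintro _ ⟨s, hs, m, rfl⟩
    exact mem_iSup_of_mem m ⟨s, hs, rfl⟩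
  · exact iSup_le fun m ↦ map_le_iff_le_comap.mpr fun s hs ↦ subset_span ⟨s, hs, m, rfl⟩

noncomputable def smulQuotMap (S : Submodule R R) (m : M) :
    (R ⧸ S) →ₗ[R] M ⧸ smulSub R M S :=
  S.mapQ (smulSub R M S) (toSpanSingleton R M m) (show S ≤ (smulSub R M S).comap _ from
    fun s hs ↦ subset_span ⟨s, hs, m, rfl⟩)

theorem map_smulSub_mkQ_eq_iSup_range (S S' : Submodule R R) :
    (smulSub R M S').map (smulSub R M S).mkQ =
      ⨆ m : M, range (smulQuotMap R M S m ∘ₗ (S'.map S.mkQ).subtype) := by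
  rw [smulSub_eq_iSup R M S', Submodule.map_iSup]
  refine iSup_congr fun m ↦ ?_
  rw [range_comp, range_subtype, ← map_comp, ← map_comp, smulQuotMap, mapQ_mkQ]

end Layers

theorem smul_layer_isSemisimple_of_semiartinian_general
    (R : Type u) [Ring R]
    (M : Type u) [AddCommGroup M] [Module R M]
    (α : Ordinal.{u}) :
    IsSemisimpleModule R
      ((smulSub R M (loewy R R (α + 1))).map (smulSub R M (loewy R R α)).mkQ) ∧
    ∀ T : Submodule R
        ((smulSub R M (loewy R R (α + 1))).map (smulSub R M (loewy R R α)).mkQ),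
      IsAtom T → ∃ T' : Submodule R (loewyLayer R α), IsAtom T' ∧ Nonempty (T ≃ₗ[R] T') := by
  have := isSemisimpleModule_map_loewy_succ R R α
  rw [map_smulSub_mkQ_eq_iSup_range]
  exact ⟨isSemisimpleModule_iSup_range _, exists_isAtom_linearEquiv_of_iSup_range _⟩

/-- For a semiartinian ring `R` with socle sequence `(S_α)_{α ≤ σ+1}` and any module `M`,
the quotient `M·S_{α+1}/M·S_α` is a direct sum of simple modules, each isomorphic to a simple
direct summand of the layer `S_{α+1}/S_α`. -/
theorem smul_layer_isSemisimple_of_semiartinian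
    (R : Type u) [Ring R] (hsa : IsSemiartinianRing R)
    (σ : Ordinal.{u}) (hlen : loewy R R (σ + 1) = ⊤)
    (M : Type u) [AddCommGroup M] [Module R M]
    (α : Ordinal.{u}) (hα : α ≤ σ) :
    IsSemisimpleModule R
      ((smulSub R M (loewy R R (α + 1))).map (smulSub R M (loewy R R α)).mkQ) ∧
    ∀ T : Submodule R
        ((smulSub R M (loewy R R (α + 1))).map (smulSub R M (loewy R R α)).mkQ),
      IsAtom T → ∃ T' : Submodule R (loewyLayer R α), IsAtom T' ∧ Nonempty (T ≃ₗ[R] T') :=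
  smul_layer_isSemisimple_of_semiartinian_general R M α
end
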